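/- In the category of compactly generated weak Hausdorff spaces, the pushout of a diagram X ← A → B in which A → B is a closed embedding, computed in the category of all topological spaces, is already weak Hausdorff (and compactly generated), hence agrees with the pushout computed in CGWH spaces. -/

import Mathlib

/-!
The quotient map `mk : X ⊕ B → P` onto the pushout sends `inl '' S ∪ inr '' T` to a closed set
as soon as `S`, `T` and `f '' i⁻¹' T` are closed: since `i` is an injective closed map, the
saturation of that set is `inl '' S' ∪ inr '' (T ∪ i '' f⁻¹' S')` with `S' = S ∪ f '' i⁻¹' T`.
For `X` and `B` weak Hausdorff this makes `mk ∘ inl ∘ g` and `mk ∘ inr ∘ g` closed maps for every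
compact Hausdorff probe `g`. A closed map out of a compact Hausdorff space has a closed Hausdorff
image, so for every probe `u` of `P` the coincidence set `{(l, k) | mk (g l) = u k}` is closed
and its projection `g⁻¹' range u` is closed; compact generation of `X` and `B` then makes
`range u` closed. Compact generation of `P` is inherited from `X` and `B` directly.
-/

open CategoryTheory Limits Topology

set_option synthInstance.maxHeartbeats 800000

/-- A space is weak Hausdorff if images of maps from compact Hausdorff spaces
are closed. -/
def IsWeakHausdorff (X : Type) [TopologicalSpace X] : Prop :=
  ∀ (K : Type) (_ : TopologicalSpace K), CompactSpace K → T2Space K →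
    ∀ u : C(K, X), IsClosed (Set.range u)

/-- A space is compactly generated if a set is closed as soon as its preimage
under every map from a compact Hausdorff space is closed. -/
def IsCompactlyGeneratedSpace (X : Type) [TopologicalSpace X] : Prop :=
  ∀ s : Set X,
    (∀ (K : Type) (_ : TopologicalSpace K), CompactSpace K → T2Space K →
      ∀ u : C(K, X), IsClosed (u ⁻¹' s)) →
    IsClosed s

/-- The pushout of `X ← A → B`, computed in the category of all topological spaces:
the quotient of `X ⊔ B` identifying `f a` with `i a`. -/
def PushoutSpace {A X B : Type} [TopologicalSpace A] [TopologicalSpace X]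
    [TopologicalSpace B] (f : C(A, X)) (i : C(A, B)) : Type :=
  Quot (fun u v : X ⊕ B => ∃ a : A, u = Sum.inl (f a) ∧ v = Sum.inr (i a))

instance {A X B : Type} [TopologicalSpace A] [TopologicalSpace X] [TopologicalSpace B]
    (f : C(A, X)) (i : C(A, B)) : TopologicalSpace (PushoutSpace f i) :=
  instTopologicalSpaceQuot

open Set Function

theorem t2Space_range_of_isClosedMap {K Y : Type*} [TopologicalSpace K] [TopologicalSpace Y]
    [CompactSpace K] [T2Space K] {g : K → Y} (hg : Continuous g) (hgc : IsClosedMap g) :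
    T2Space (range g) := by
  refine ⟨?_⟩
  rintro ⟨_, k₁, rfl⟩ ⟨_, k₂, rfl⟩ hne
  have hfib : ∀ k, IsClosed (g ⁻¹' {g k}) := fun k => by
    simpa only [image_singleton] using (hgc _ isClosed_singleton).preimage hg
  have hdisj : Disjoint (g ⁻¹' {g k₁}) (g ⁻¹' {g k₂}) :=
    disjoint_left.2 fun k h₁ h₂ => hne (Subtype.ext (h₁.symm.trans h₂))
  obtain ⟨U, V, hU, hV, hkU, hkV, hUV⟩ := NormalSpace.normal _ _ (hfib k₁) (hfib k₂) hdisj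
  refine ⟨(↑) ⁻¹' (g '' Uᶜ)ᶜ, (↑) ⁻¹' (g '' Vᶜ)ᶜ,
    ((hgc _ hU.isClosed_compl).isOpen_compl).preimage continuous_subtype_val,
    ((hgc _ hV.isClosed_compl).isOpen_compl).preimage continuous_subtype_val, ?_, ?_, ?_⟩
  · rintro ⟨k, hk, he⟩
    exact hk (hkU he)
  · rintro ⟨k, hk, he⟩
    exact hk (hkV he)
  · refine disjoint_left.2 ?_
    rintro ⟨_, k, rfl⟩ h₁ h₂
    exact disjoint_left.1 hUV (not_not.1 fun hk => h₁ ⟨k, hk, rfl⟩)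
      (not_not.1 fun hk => h₂ ⟨k, hk, rfl⟩)

theorem isClosed_setOf_eq_of_forall_mem {M Y : Type*} [TopologicalSpace M] [TopologicalSpace Y]
    {S : Set Y} (hS : IsClosed S) [T2Space S] {g h : M → Y} (hg : Continuous g)
    (hh : Continuous h) (hgS : ∀ m, g m ∈ S) : IsClosed {m | g m = h m} := by
  have hE : {m | g m = h m} =
      (↑) '' {m : h ⁻¹' S | (⟨g m, hgS m⟩ : S) = ⟨h m, m.2⟩} := by
    ext m
    simp only [mem_image, Subtype.mk.injEq, Subtype.exists, mem_preimage,
      exists_and_right, exists_eq_right]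
    exact ⟨fun he => ⟨he ▸ hgS m, he⟩, fun ⟨_, he⟩ => he⟩
  rw [hE]
  refine (isClosed_eq ?_ ?_).trans (hS.preimage hh)
  · exact (hg.comp continuous_subtype_val).subtype_mk _
  · exact (hh.comp continuous_subtype_val).subtype_mk _

theorem isClosed_preimage_range_of_isClosedMap {K L Y : Type*} [TopologicalSpace K]
    [TopologicalSpace L] [TopologicalSpace Y] [CompactSpace K] [CompactSpace L] [T2Space L]
    {u : K → Y} (hu : Continuous u) {g : L → Y} (hg : Continuous g) (hgc : IsClosedMap g) :
    IsClosed (g ⁻¹' range u) := by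
  have := t2Space_range_of_isClosedMap hg hgc
  have hE : IsClosed {p : L × K | g p.1 = u p.2} :=
    isClosed_setOf_eq_of_forall_mem hgc.isClosed_range (hg.comp continuous_fst)
      (hu.comp continuous_snd) fun p => mem_range_self p.1
  have hpre : g ⁻¹' range u = Prod.fst '' {p : L × K | g p.1 = u p.2} := by
    ext l
    simp [eq_comm]
  rw [hpre]
  exact isClosedMap_fst_of_compactSpace _ hE

theorem IsWeakHausdorff.isClosedMap {X K : Type} [TopologicalSpace X] [TopologicalSpace K]
    [CompactSpace K] [T2Space K] (hX : IsWeakHausdorff X) {g : K → X} (hg : Continuous g) :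
    IsClosedMap g := by
  intro C hC
  have : CompactSpace C := isCompact_iff_compactSpace.mp hC.isCompact
  rw [image_eq_range]
  exact hX C _ this inferInstance ⟨_, hg.comp continuous_subtype_val⟩

theorem IsWeakHausdorff.isClosed_image_preimage_range {A X B K : Type} [TopologicalSpace A]
    [TopologicalSpace X] [TopologicalSpace B] [TopologicalSpace K] [CompactSpace K] [T2Space K]
    (hX : IsWeakHausdorff X) {f : A → X} (hf : Continuous f) {i : A → B}
    (hi : IsClosedEmbedding i) {v : K → B} (hv : Continuous v) :
    IsClosed (f '' (i ⁻¹' range v)) := by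
  set K' := v ⁻¹' range i
  have : CompactSpace K' :=
    isCompact_iff_compactSpace.mp (hi.isClosed_range.preimage hv).isCompact
  choose a ha using fun k : K' => k.2
  have ha_cont : Continuous a := by
    rw [hi.isInducing.continuous_iff, show i ∘ a = v ∘ (↑) from funext ha]
    exact hv.comp continuous_subtype_val
  have hrange : f '' (i ⁻¹' range v) = range (f ∘ a) := by
    ext x
    constructor
    · rintro ⟨a', ⟨k, hk⟩, rfl⟩
      exact ⟨⟨k, a', hk.symm⟩, congrArg f (hi.injective ((ha _).trans hk))⟩
    · rintro ⟨k, rfl⟩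
      exact ⟨a k, ⟨k, (ha k).symm⟩, rfl⟩
  rw [hrange]
  exact (hX.isClosedMap (hf.comp ha_cont)).isClosed_range

namespace PushoutSpace

variable {A X B : Type} [TopologicalSpace A] [TopologicalSpace X] [TopologicalSpace B]
  {f : C(A, X)} {i : C(A, B)}

variable (f i) in
def mk : X ⊕ B → PushoutSpace f i := Quot.mk _

theorem mk_inl_eq_mk_inr (a : A) : mk f i (.inl (f a)) = mk f i (.inr (i a)) :=
  Quot.sound ⟨a, rfl, rfl⟩

theorem isQuotientMap_mk : IsQuotientMap (mk f i) := isQuotientMap_quot_mk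

@[fun_prop]
theorem continuous_mk : Continuous (mk f i) := isQuotientMap_mk.continuous

theorem isClosed_iff {s : Set (PushoutSpace f i)} :
    IsClosed s ↔ IsClosed (mk f i ∘ Sum.inl ⁻¹' s) ∧ IsClosed (mk f i ∘ Sum.inr ⁻¹' s) := by
  rw [← isQuotientMap_mk.isClosed_preimage, isClosed_sum_iff]
  rfl

theorem preimage_image_mk_of_saturated {W : Set (X ⊕ B)}
    (hW : ∀ a, .inl (f a) ∈ W ↔ .inr (i a) ∈ W) : mk f i ⁻¹' (mk f i '' W) = W := by
  refine Subset.antisymm ?_ (subset_preimage_image _ _)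
  rintro u ⟨w, hw, hwu⟩
  let memW : PushoutSpace f i → Prop :=
    Quot.lift (· ∈ W) (by rintro _ _ ⟨a, rfl, rfl⟩; exact propext (hW a))
  exact (congrArg memW hwu).mp hw

theorem isClosed_image_mk (hi : IsClosedEmbedding i) {S : Set X} {T : Set B}
    (hS : IsClosed S) (hT : IsClosed T) (hST : IsClosed (f '' (i ⁻¹' T))) :
    IsClosed (mk f i '' (.inl '' S ∪ .inr '' T)) := by
  set S' := S ∪ f '' (i ⁻¹' T)
  set Z := mk f i '' (Sum.inl '' S ∪ Sum.inr '' T)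
  have hS'Z : ∀ x ∈ S', mk f i (.inl x) ∈ Z := by
    rintro _ (hx | ⟨a, ha, rfl⟩)
    · exact mem_image_of_mem _ (.inl (mem_image_of_mem _ hx))
    · rw [mk_inl_eq_mk_inr]
      exact mem_image_of_mem _ (.inr (mem_image_of_mem _ ha))
  have hsat : Z = mk f i '' (.inl '' S' ∪ .inr '' (T ∪ i '' (f ⁻¹' S'))) := by
    refine Subset.antisymm (image_mono (union_subset_union (image_mono subset_union_left)
      (image_mono subset_union_left))) ?_
    rintro _ ⟨_, ⟨x, hx, rfl⟩ | ⟨b, hb | ⟨a, ha, rfl⟩, rfl⟩, rfl⟩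
    · exact hS'Z x hx
    · exact mem_image_of_mem _ (.inr (mem_image_of_mem _ hb))
    · rw [← mk_inl_eq_mk_inr]
      exact hS'Z _ ha
  rw [hsat, ← isQuotientMap_mk.isClosed_preimage, preimage_image_mk_of_saturated, isClosed_sum_iff]
  · simp only [preimage_union, preimage_inl_image_inr, preimage_inr_image_inl,
      Sum.inl_injective.preimage_image, Sum.inr_injective.preimage_image, union_empty,
      empty_union]
    exact ⟨hS.union hST, hT.union (hi.isClosedMap _ ((hS.union hST).preimage f.continuous))⟩
  · intro a
    simpa [hi.injective.eq_iff] using fun ha => .inr ⟨a, ha, rfl⟩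

theorem isClosedMap_mk_inl_comp (hX : IsWeakHausdorff X) (hi : IsClosedEmbedding i)
    {K : Type} [TopologicalSpace K] [CompactSpace K] [T2Space K] {g : K → X}
    (hg : Continuous g) : IsClosedMap (mk f i ∘ Sum.inl ∘ g) := by
  intro C hC
  have h := isClosed_image_mk (f := f) hi (hX.isClosedMap hg C hC) isClosed_empty
    (by simp)
  rwa [image_empty, union_empty, ← image_comp, ← image_comp] at h

theorem isClosedMap_mk_inr_comp (hX : IsWeakHausdorff X) (hB : IsWeakHausdorff B)
    (hi : IsClosedEmbedding i) {K : Type} [TopologicalSpace K] [CompactSpace K] [T2Space K]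
    {v : K → B} (hv : Continuous v) : IsClosedMap (mk f i ∘ Sum.inr ∘ v) := by
  intro C hC
  have : CompactSpace C := isCompact_iff_compactSpace.mp hC.isCompact
  have hfi : IsClosed (f '' (i ⁻¹' (v '' C))) := by
    have h := hX.isClosed_image_preimage_range (K := C) f.continuous hi
      (hv.comp continuous_subtype_val)
    rwa [range_comp, Subtype.range_coe] at h
  have h := isClosed_image_mk hi isClosed_empty (hB.isClosedMap hv C hC) hfi
  rwa [image_empty, empty_union, ← image_comp, ← image_comp] at h

end PushoutSpace

theorem stmt17_general {A X B : Type} [TopologicalSpace A] [TopologicalSpace X]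
    [TopologicalSpace B]
    (hX : IsWeakHausdorff X ∧ IsCompactlyGeneratedSpace X)
    (hB : IsWeakHausdorff B ∧ IsCompactlyGeneratedSpace B)
    (f : C(A, X)) (i : C(A, B)) (hi : IsClosedEmbedding i) :
    IsWeakHausdorff (PushoutSpace f i) ∧ IsCompactlyGeneratedSpace (PushoutSpace f i) := by
  obtain ⟨hXw, hXc⟩ := hX
  obtain ⟨hBw, hBc⟩ := hB
  refine ⟨fun K _ _ _ u => PushoutSpace.isClosed_iff.2 ⟨?_, ?_⟩,
    fun s hs => PushoutSpace.isClosed_iff.2 ⟨?_, ?_⟩⟩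
  · exact hXc _ fun L _ _ _ g => isClosed_preimage_range_of_isClosedMap u.continuous
      (by fun_prop) (PushoutSpace.isClosedMap_mk_inl_comp hXw hi g.continuous)
  · exact hBc _ fun L _ _ _ v => isClosed_preimage_range_of_isClosedMap u.continuous
      (by fun_prop) (PushoutSpace.isClosedMap_mk_inr_comp hXw hBw hi v.continuous)
  · exact hXc _ fun L _ _ _ g => hs L _ ‹_› ‹_› ⟨_, by fun_prop⟩
  · exact hBc _ fun L _ _ _ v => hs L _ ‹_› ‹_› ⟨_, by fun_prop⟩

/-- If `A`, `X`, `B` are compactly generated weak Hausdorff and `i : A → B` is a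
closed embedding, then the pushout `X ∪_A B`, computed in the category of all
topological spaces, is again weak Hausdorff and compactly generated (hence agrees
with the pushout computed in CGWH spaces). -/
theorem stmt17 {A X B : Type} [TopologicalSpace A] [TopologicalSpace X]
    [TopologicalSpace B]
    (hA : IsWeakHausdorff A ∧ IsCompactlyGeneratedSpace A)
    (hX : IsWeakHausdorff X ∧ IsCompactlyGeneratedSpace X)
    (hB : IsWeakHausdorff B ∧ IsCompactlyGeneratedSpace B)
    (f : C(A, X)) (i : C(A, B)) (hi : IsClosedEmbedding i) :
    IsWeakHausdorff (PushoutSpace f i) ∧ IsCompactlyGeneratedSpace (PushoutSpace f i) :=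
  stmt17_general hX hB f i hi
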